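/- Being a bi-skew brace is invariant under isoclinism: if the skew braces B₁ and B₂ are isoclinic and B₁ is a bi-skew brace, then B₂ is a bi-skew brace. -/
import Mathlib


/-- A (right) skew brace: `(B, ·)` (the ambient group structure) and `(B, ∘)`
(given by `circ`, with unit `cone` and inverse `cinv`) are groups, related by
`((y · z) ∘ x) · x⁻¹ = ((y ∘ x) · x⁻¹) · ((z ∘ x) · x⁻¹)`. -/
structure RightSkewBrace (B : Type*) [Group B] where
  circ : B → B → B
  circ_assoc : ∀ x y z : B, circ (circ x y) z = circ x (circ y z)
  cone : B
  cone_circ : ∀ x : B, circ cone x = x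
  circ_cone : ∀ x : B, circ x cone = x
  cinv : B → B
  cinv_circ : ∀ x : B, circ (cinv x) x = cone
  circ_cinv : ∀ x : B, circ x (cinv x) = cone
  compat : ∀ x y z : B,
    circ (y * z) x * x⁻¹ = (circ y x * x⁻¹) * (circ z x * x⁻¹)

namespace RightSkewBrace

variable {B : Type*} [Group B]

/-- The gamma function: `γ(x)(y) = (y ∘ x) · x⁻¹`. -/
def gamma (S : RightSkewBrace B) (x y : B) : B := S.circ y x * x⁻¹

/-- The star commutator: `x * y = x⁻¹ · (x ∘ y) · y⁻¹`. -/
def star (S : RightSkewBrace B) (x y : B) : B := x⁻¹ * S.circ x y * y⁻¹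

/-- The commutator `[a, b] = a⁻¹ b⁻¹ a b` in the additive group `(B, ·)`. -/
def comm (a b : B) : B := a⁻¹ * b⁻¹ * a * b

/-- Membership in the annihilator `Ann(B) = Z(B,·) ∩ ker γ ∩ C_B(γ(B))`. -/
def inAnn (S : RightSkewBrace B) (c : B) : Prop :=
  (∀ x : B, c * x = x * c) ∧ (∀ y : B, S.gamma c y = y) ∧ (∀ y : B, S.gamma y c = c)

/-- Membership in `B' = [B,B] · [B, γ(B)]`, the subgroup of `(B,·)` generated by
all additive commutators and all star commutators. -/
def inDerived (S : RightSkewBrace B) (x : B) : Prop :=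
  x ∈ Subgroup.closure { z : B | ∃ a b : B, z = comm a b ∨ z = S.star a b }

/-- `B` is a bi-skew brace: `(B, ∘, ·)` is also a (right) skew brace, i.e. the
skew brace compatibility holds with the roles of the operations exchanged. -/
def IsBiSkew (S : RightSkewBrace B) : Prop :=
  ∀ x y z : B, S.circ (S.circ y z * x) (S.cinv x) =
    S.circ (S.circ (y * x) (S.cinv x)) (S.circ (z * x) (S.cinv x))

/-- `B` is λ-homomorphic: `γ : (B, ·) → Aut(B, ·)` is a homomorphism,
`γ(x·y) = γ(x)γ(y)` (apply `γ(x)` first, maps acting on the right). -/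
def IsLambdaHom (S : RightSkewBrace B) : Prop :=
  ∀ x y z : B, S.gamma (x * y) z = S.gamma y (S.gamma x z)

/-- `B` is inner: every `γ(y)` is an inner automorphism of `(B, ·)`. -/
def IsInner (S : RightSkewBrace B) : Prop :=
  ∀ y : B, ∃ t : B, ∀ x : B, S.gamma y x = t⁻¹ * x * t

end RightSkewBrace

open RightSkewBrace

/-- An isoclinism of skew braces, phrased on representatives: `xi` induces a
skew brace isomorphism `B₁/Ann(B₁) → B₂/Ann(B₂)`, `theta` restricts to a skew
brace isomorphism `B₁' → B₂'`, and the pair is compatible with the additive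
commutator map and the star commutator map. -/
structure Isoclinism {B₁ B₂ : Type*} [Group B₁] [Group B₂]
    (S₁ : RightSkewBrace B₁) (S₂ : RightSkewBrace B₂) where
  xi : B₁ → B₂
  theta : B₁ → B₂
  xi_surj : ∀ u : B₂, ∃ x : B₁, S₂.inAnn (u⁻¹ * xi x)
  xi_inj : ∀ x y : B₁, S₂.inAnn ((xi x)⁻¹ * xi y) → S₁.inAnn (x⁻¹ * y)
  xi_congr : ∀ x y : B₁, S₁.inAnn (x⁻¹ * y) → S₂.inAnn ((xi x)⁻¹ * xi y)
  xi_mul : ∀ x y : B₁, S₂.inAnn ((xi (x * y))⁻¹ * (xi x * xi y))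
  xi_circ : ∀ x y : B₁, S₂.inAnn ((xi (S₁.circ x y))⁻¹ * S₂.circ (xi x) (xi y))
  theta_maps : ∀ x : B₁, S₁.inDerived x → S₂.inDerived (theta x)
  theta_mul : ∀ x y : B₁, S₁.inDerived x → S₁.inDerived y →
    theta (x * y) = theta x * theta y
  theta_circ : ∀ x y : B₁, S₁.inDerived x → S₁.inDerived y →
    theta (S₁.circ x y) = S₂.circ (theta x) (theta y)
  theta_inj : ∀ x y : B₁, S₁.inDerived x → S₁.inDerived y → theta x = theta y → x = y
  theta_surj : ∀ u : B₂, S₂.inDerived u → ∃ x : B₁, S₁.inDerived x ∧ theta x = u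
  comm_comm : ∀ x y : B₁, theta (comm x y) = comm (xi x) (xi y)
  star_comm : ∀ x y : B₁, theta (S₁.star x y) = S₂.star (xi x) (xi y)

namespace RightSkewBrace

variable {B : Type*} [Group B] (S : RightSkewBrace B)

lemma circ_eq (x y : B) : S.circ y x = S.gamma x y * x := by
  simp [gamma]

lemma gamma_mul_right (x y z : B) :
    S.gamma x (y * z) = S.gamma x y * S.gamma x z :=
  S.compat x y z

lemma gamma_one_right (x : B) : S.gamma x 1 = 1 := by
  have h := S.gamma_mul_right x 1 1
  rw [mul_one] at h
  exact left_eq_mul.mp h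

lemma cone_eq_one : S.cone = 1 := by
  have h := S.gamma_one_right S.cone
  rw [show S.gamma S.cone 1 = S.circ 1 S.cone * S.cone⁻¹ from rfl, S.circ_cone] at h
  rw [one_mul, inv_eq_one] at h
  exact h

lemma circ_one_right (y : B) : S.circ y 1 = y := by
  rw [← S.cone_eq_one, S.circ_cone]

lemma gamma_one_left (y : B) : S.gamma 1 y = y := by
  show S.circ y 1 * (1 : B)⁻¹ = y
  rw [S.circ_one_right, inv_one, mul_one]

lemma gamma_inv_right (x y : B) : S.gamma x y⁻¹ = (S.gamma x y)⁻¹ := by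
  have h := S.gamma_mul_right x y y⁻¹
  rw [mul_inv_cancel, S.gamma_one_right] at h
  exact eq_inv_of_mul_eq_one_right h.symm

lemma gamma_circ (a b y : B) :
    S.gamma (S.circ a b) y = S.gamma b (S.gamma a y) := by
  have h2 := S.compat b (S.gamma a y) a
  rw [← S.circ_eq a y] at h2
  rw [S.circ_assoc] at h2
  -- h2 : S.circ y (S.circ a b) * b⁻¹ = (S.circ (S.gamma a y) b * b⁻¹) * (S.circ a b * b⁻¹)
  have hU : S.circ y (S.circ a b) = (S.circ (S.gamma a y) b * b⁻¹) * S.circ a b := by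
    have h3 := congrArg (· * b) h2
    simpa [mul_assoc] using h3
  show S.circ y (S.circ a b) * (S.circ a b)⁻¹ = S.circ (S.gamma a y) b * b⁻¹
  rw [hU, mul_inv_cancel_right]

lemma circ_mul_cinv (x a : B) :
    S.circ (a * x) (S.cinv x) = S.gamma (S.cinv x) a := by
  rw [S.circ_eq, S.gamma_mul_right, mul_assoc, ← S.circ_eq, S.circ_cinv,
    S.cone_eq_one, mul_one]

lemma cinv_cinv (x : B) : S.cinv (S.cinv x) = x := by
  have h : S.circ (S.circ (S.cinv (S.cinv x)) (S.cinv x)) x = S.circ S.cone x := by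
    rw [S.cinv_circ]
  rw [S.circ_assoc, S.cinv_circ, S.circ_cone, S.cone_circ] at h
  exact h

lemma gamma_circ_cinv (x a : B) :
    S.gamma x (S.circ (a * x) (S.cinv x)) = a := by
  show S.circ (S.circ (a * x) (S.cinv x)) x * x⁻¹ = a
  rw [S.circ_assoc, S.cinv_circ, S.circ_cone, mul_inv_cancel_right]

lemma star_eq' (a x : B) : S.star a x = a⁻¹ * S.gamma x a := by
  simp [star, gamma, mul_assoc]

lemma gamma_eq_star (x a : B) : S.gamma x a = a * S.star a x := by
  simp [star, gamma, mul_assoc]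

lemma isBiSkew_iff_endo : S.IsBiSkew ↔
    ∀ w y z : B, S.gamma w (S.circ y z) = S.circ (S.gamma w y) (S.gamma w z) := by
  constructor
  · intro h w y z
    have h1 := h (S.cinv w) y z
    rw [S.circ_mul_cinv, S.circ_mul_cinv, S.circ_mul_cinv, S.cinv_cinv] at h1
    exact h1
  · intro h x y z
    rw [S.circ_mul_cinv, S.circ_mul_cinv, S.circ_mul_cinv]
    exact h (S.cinv x) y z

lemma isBiSkew_iff_P : S.IsBiSkew ↔
    ∀ z w y : B, S.gamma (z * w) y = S.gamma z (S.gamma w y) := by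
  rw [S.isBiSkew_iff_endo]
  constructor
  · intro h z w y
    set t := S.circ (z * w) (S.cinv w) with htdef
    have ht : S.gamma w t = z := S.gamma_circ_cinv w z
    have hq : S.gamma w (S.gamma t y) = S.gamma (S.gamma w t) (S.gamma w y) := by
      have h1 := h w y t
      rw [S.circ_eq t y, S.gamma_mul_right, S.circ_eq (S.gamma w t) (S.gamma w y)] at h1
      exact mul_right_cancel h1
    have hzw : z * w = S.circ t w := by rw [S.circ_eq w t, ht]
    rw [hzw, S.gamma_circ, hq, ht]
  · intro h w y z
    have key : S.gamma w (S.gamma z y) = S.gamma (S.gamma w z) (S.gamma w y) := by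
      rw [← S.gamma_circ z w y, S.circ_eq w z, h (S.gamma w z) w y]
    rw [S.circ_eq z y, S.gamma_mul_right, S.circ_eq (S.gamma w z) (S.gamma w y), key]

lemma isBiSkew_iff_star : S.IsBiSkew ↔
    ∀ y z w : B, S.star y (z * w)
      = S.star y z * (S.star y w * S.star (S.star y w) z) := by
  rw [S.isBiSkew_iff_P]
  constructor
  · intro h y z w
    have hp := h z w y
    rw [S.gamma_eq_star (z * w) y, S.gamma_eq_star w y, S.gamma_mul_right,
      S.gamma_eq_star z y, S.gamma_eq_star z (S.star y w), mul_assoc] at hp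
    exact mul_left_cancel hp
  · intro h z w y
    rw [S.gamma_eq_star (z * w) y, S.gamma_eq_star w y, S.gamma_mul_right,
      S.gamma_eq_star z y, S.gamma_eq_star z (S.star y w), mul_assoc, h y z w]

lemma inAnn_one : S.inAnn 1 :=
  ⟨fun x => by rw [one_mul, mul_one], fun y => S.gamma_one_left y,
    fun y => S.gamma_one_right y⟩

lemma central_conj {c : B} (hc : S.inAnn c) (a : B) : a * c * a⁻¹ = c := by
  rw [← hc.1 a, mul_assoc, mul_inv_cancel, mul_one]

lemma conj_by_central {c : B} (hc : S.inAnn c) (X : B) : c * X * c⁻¹ = X := by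
  rw [hc.1 X, mul_assoc, mul_inv_cancel, mul_one]

lemma inAnn_mul {c d : B} (hc : S.inAnn c) (hd : S.inAnn d) : S.inAnn (c * d) := by
  refine ⟨fun x => ?_, fun y => ?_, fun y => ?_⟩
  · rw [mul_assoc, hd.1 x, ← mul_assoc, hc.1 x, mul_assoc]
  · have h1 : c * d = S.circ c d := by rw [S.circ_eq d c, hc.2.2 d]
    rw [h1, S.gamma_circ, hc.2.1 y, hd.2.1 y]
  · rw [S.gamma_mul_right, hc.2.2 y, hd.2.2 y]

lemma inAnn_inv {c : B} (hc : S.inAnn c) : S.inAnn c⁻¹ := by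
  have hcinv : S.cinv c = c⁻¹ := by
    have h := S.cinv_circ c
    rw [S.circ_eq c (S.cinv c), hc.2.1 (S.cinv c), S.cone_eq_one] at h
    exact eq_inv_of_mul_eq_one_left h
  refine ⟨fun x => ?_, fun y => ?_, fun y => ?_⟩
  · have h := hc.1 x
    calc c⁻¹ * x = c⁻¹ * x * c * c⁻¹ := by group
      _ = c⁻¹ * c * x * c⁻¹ := by rw [mul_assoc c⁻¹ x c, ← h, ← mul_assoc]
      _ = x * c⁻¹ := by group
  · have h := S.gamma_circ c (S.cinv c) y
    rw [S.circ_cinv, S.cone_eq_one, S.gamma_one_left, hcinv, hc.2.1 y] at h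
    exact h.symm
  · rw [S.gamma_inv_right, hc.2.2 y]

lemma gamma_mul_ann {c : B} (hc : S.inAnn c) (b y : B) :
    S.gamma (b * c) y = S.gamma b y := by
  have h1 : b * c = S.circ b c := by rw [S.circ_eq c b, hc.2.1 b]
  rw [h1, S.gamma_circ, hc.2.1 (S.gamma b y)]

lemma star_ann_right {c : B} (hc : S.inAnn c) (a b : B) :
    S.star a (b * c) = S.star a b := by
  rw [S.star_eq' a (b * c), S.star_eq' a b, S.gamma_mul_ann hc b a]

lemma star_ann_left {c : B} (hc : S.inAnn c) (a b : B) :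
    S.star (a * c) b = S.star a b := by
  rw [S.star_eq' (a * c) b, S.star_eq' a b, S.gamma_mul_right, hc.2.2 b, mul_inv_rev]
  have h1 : S.inAnn c⁻¹ := S.inAnn_inv hc
  calc c⁻¹ * a⁻¹ * (S.gamma b a * c)
      = c⁻¹ * (a⁻¹ * S.gamma b a) * c⁻¹⁻¹ := by group
    _ = a⁻¹ * S.gamma b a := S.conj_by_central h1 _

lemma star_congr_left {u v : B} (h : S.inAnn (u⁻¹ * v)) (b : B) :
    S.star v b = S.star u b := by
  have hv : v = u * (u⁻¹ * v) := by group
  rw [hv, S.star_ann_left h]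

lemma star_congr_right {u v : B} (h : S.inAnn (u⁻¹ * v)) (a : B) :
    S.star a v = S.star a u := by
  have hv : v = u * (u⁻¹ * v) := by group
  rw [hv, S.star_ann_right h]

lemma ann_refl (u : B) : S.inAnn (u⁻¹ * u) := by
  rw [inv_mul_cancel]; exact S.inAnn_one

lemma ann_symm {u v : B} (h : S.inAnn (u⁻¹ * v)) : S.inAnn (v⁻¹ * u) := by
  have h1 : v⁻¹ * u = (u⁻¹ * v)⁻¹ := by group
  rw [h1]; exact S.inAnn_inv h

lemma ann_trans {u v w : B} (h1 : S.inAnn (u⁻¹ * v)) (h2 : S.inAnn (v⁻¹ * w)) :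
    S.inAnn (u⁻¹ * w) := by
  have h3 : u⁻¹ * w = (u⁻¹ * v) * (v⁻¹ * w) := by group
  rw [h3]; exact S.inAnn_mul h1 h2

lemma ann_mul_congr {u u' v v' : B} (hu : S.inAnn (u⁻¹ * u')) (hv : S.inAnn (v⁻¹ * v')) :
    S.inAnn ((u * v)⁻¹ * (u' * v')) := by
  have h1 : (u * v)⁻¹ * (u' * v') = (v⁻¹ * (u⁻¹ * u') * v⁻¹⁻¹) * (v⁻¹ * v') := by group
  rw [h1, S.central_conj hu]
  exact S.inAnn_mul hu hv

lemma ann_inv_congr {u u' : B} (h : S.inAnn (u⁻¹ * u')) :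
    S.inAnn (u⁻¹⁻¹ * u'⁻¹) := by
  have h1 : u⁻¹⁻¹ * u'⁻¹ = u * (u⁻¹ * u')⁻¹ * u⁻¹ := by group
  rw [h1, S.central_conj (S.inAnn_inv h)]
  exact S.inAnn_inv h

lemma inDerived_one : S.inDerived (1 : B) := Subgroup.one_mem _

lemma inDerived_mul {a b : B} (ha : S.inDerived a) (hb : S.inDerived b) :
    S.inDerived (a * b) := Subgroup.mul_mem _ ha hb

lemma inDerived_inv {a : B} (ha : S.inDerived a) : S.inDerived a⁻¹ :=
  Subgroup.inv_mem _ ha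

lemma inDerived_star (a b : B) : S.inDerived (S.star a b) :=
  Subgroup.subset_closure ⟨a, b, Or.inr rfl⟩

lemma inDerived_comm (a b : B) : S.inDerived (comm a b) :=
  Subgroup.subset_closure ⟨a, b, Or.inl rfl⟩

end RightSkewBrace

namespace Isoclinism

variable {B₁ B₂ : Type*} [Group B₁] [Group B₂]
  {S₁ : RightSkewBrace B₁} {S₂ : RightSkewBrace B₂} (e : Isoclinism S₁ S₂)

lemma xi_one_ann : S₂.inAnn (e.xi 1) := by
  have h := e.xi_mul 1 1
  rw [mul_one] at h
  have h1 : (e.xi 1)⁻¹ * (e.xi 1 * e.xi 1) = e.xi 1 := by group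
  rwa [h1] at h

lemma xi_inv_rel (x : B₁) : S₂.inAnn ((e.xi x⁻¹)⁻¹ * (e.xi x)⁻¹) := by
  have h1 := e.xi_mul x x⁻¹
  rw [mul_inv_cancel] at h1
  have h3 : S₂.inAnn (e.xi x * e.xi x⁻¹) := by
    have hrw : e.xi x * e.xi x⁻¹ = e.xi 1 * ((e.xi 1)⁻¹ * (e.xi x * e.xi x⁻¹)) := by
      group
    rw [hrw]; exact S₂.inAnn_mul e.xi_one_ann h1
  have hrw2 : (e.xi x⁻¹)⁻¹ * (e.xi x)⁻¹ = (e.xi x * e.xi x⁻¹)⁻¹ := by group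
  rw [hrw2]; exact S₂.inAnn_inv h3

lemma theta_one : e.theta 1 = 1 := by
  have h := e.theta_mul 1 1 S₁.inDerived_one S₁.inDerived_one
  rw [mul_one] at h
  exact left_eq_mul.mp h

lemma theta_inv {a : B₁} (ha : S₁.inDerived a) : e.theta a⁻¹ = (e.theta a)⁻¹ := by
  have h := e.theta_mul a a⁻¹ ha (S₁.inDerived_inv ha)
  rw [mul_inv_cancel, e.theta_one] at h
  exact eq_inv_of_mul_eq_one_right h.symm

lemma theta_rel_xi {a : B₁} (ha : S₁.inDerived a) :
    S₂.inAnn ((e.xi a)⁻¹ * e.theta a) := by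
  refine Subgroup.closure_induction
    (p := fun x _ => S₂.inAnn ((e.xi x)⁻¹ * e.theta x)) ?_ ?_ ?_ ?_ ha
  · rintro x ⟨u, v, h | h⟩ <;> subst h
    · rw [e.comm_comm]
      have h4 := e.xi_inv_rel u
      have h5 := e.xi_inv_rel v
      have h3 : S₂.inAnn ((e.xi (u⁻¹ * v⁻¹))⁻¹ * ((e.xi u)⁻¹ * (e.xi v)⁻¹)) :=
        S₂.ann_trans (e.xi_mul u⁻¹ v⁻¹) (S₂.ann_mul_congr h4 h5)
      have h2 : S₂.inAnn ((e.xi (u⁻¹ * v⁻¹ * u))⁻¹ * ((e.xi u)⁻¹ * (e.xi v)⁻¹ * e.xi u)) :=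
        S₂.ann_trans (e.xi_mul (u⁻¹ * v⁻¹) u) (S₂.ann_mul_congr h3 (S₂.ann_refl (e.xi u)))
      exact S₂.ann_trans (e.xi_mul (u⁻¹ * v⁻¹ * u) v)
        (S₂.ann_mul_congr h2 (S₂.ann_refl (e.xi v)))
    · rw [e.star_comm]
      have h3 := e.xi_circ u v
      have h2 : S₂.inAnn ((e.xi (u⁻¹ * S₁.circ u v))⁻¹ *
          ((e.xi u)⁻¹ * S₂.circ (e.xi u) (e.xi v))) :=
        S₂.ann_trans (e.xi_mul u⁻¹ (S₁.circ u v)) (S₂.ann_mul_congr (e.xi_inv_rel u) h3)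
      exact S₂.ann_trans (e.xi_mul (u⁻¹ * S₁.circ u v) v⁻¹)
        (S₂.ann_mul_congr h2 (e.xi_inv_rel v))
  · show S₂.inAnn ((e.xi 1)⁻¹ * e.theta 1)
    rw [e.theta_one, mul_one]
    exact S₂.inAnn_inv e.xi_one_ann
  · intro x y hx hy ihx ihy
    show S₂.inAnn ((e.xi (x * y))⁻¹ * e.theta (x * y))
    rw [e.theta_mul x y hx hy]
    exact S₂.ann_trans (e.xi_mul x y) (S₂.ann_mul_congr ihx ihy)
  · intro x hx ihx
    show S₂.inAnn ((e.xi x⁻¹)⁻¹ * e.theta x⁻¹)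
    rw [e.theta_inv hx]
    exact S₂.ann_trans (e.xi_inv_rel x) (S₂.ann_inv_congr ihx)

end Isoclinism

/-- being a bi-skew brace is invariant under isoclinism. -/
theorem isBiSkew_of_isoclinic {B₁ B₂ : Type*} [Group B₁] [Group B₂]
    (S₁ : RightSkewBrace B₁) (S₂ : RightSkewBrace B₂)
    (e : Isoclinism S₁ S₂) (h : S₁.IsBiSkew) : S₂.IsBiSkew := by
  rw [S₁.isBiSkew_iff_star] at h
  rw [S₂.isBiSkew_iff_star]
  intro y z w
  obtain ⟨a, ha⟩ := e.xi_surj y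
  obtain ⟨b, hb⟩ := e.xi_surj z
  obtain ⟨c, hc⟩ := e.xi_surj w
  have hzw : S₂.inAnn ((z * w)⁻¹ * e.xi (b * c)) :=
    S₂.ann_trans (S₂.ann_mul_congr hb hc) (S₂.ann_symm (e.xi_mul b c))
  have e1 : S₂.star y (z * w) = e.theta (S₁.star a (b * c)) := by
    rw [← S₂.star_congr_left ha (z * w), ← S₂.star_congr_right hzw (e.xi a),
      ← e.star_comm a (b * c)]
  have e2 : S₂.star y z = e.theta (S₁.star a b) := by
    rw [← S₂.star_congr_left ha z, ← S₂.star_congr_right hb (e.xi a), ← e.star_comm a b]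
  have e3 : S₂.star y w = e.theta (S₁.star a c) := by
    rw [← S₂.star_congr_left ha w, ← S₂.star_congr_right hc (e.xi a), ← e.star_comm a c]
  have e4 : S₂.star (S₂.star y w) z = e.theta (S₁.star (S₁.star a c) b) := by
    rw [e3, S₂.star_congr_left (e.theta_rel_xi (S₁.inDerived_star a c)) z,
      ← S₂.star_congr_right hb (e.xi (S₁.star a c)), ← e.star_comm (S₁.star a c) b]
  rw [e4, e2, e3, e1, h a b c,
    e.theta_mul _ _ (S₁.inDerived_star a b)
      (S₁.inDerived_mul (S₁.inDerived_star a c) (S₁.inDerived_star (S₁.star a c) b)),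
    e.theta_mul _ _ (S₁.inDerived_star a c) (S₁.inDerived_star (S₁.star a c) b)]
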